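/- arXiv:0910.5300 — 5 statements merged into one kernel-verified Lean document; each statement's English description precedes it below -/
import Mathlib

section
/- Let f be a continuous piecewise linear function on [-r, r] (r > 0) with distinct roots a_μ and poles b_ν in (-r, r) with multiplicities τ_f. Then for any x ∈ (-r, r): f(x) = (1/2)(f(r)+f(-r)) + (x/(2r))(f(r)-f(-r)) - (1/(2r)) ∑_{|a_μ|<r} τ_f(a_μ)(r² - |a_μ - x| r - a_μ x) + (1/(2r)) ∑_{|b_ν|<r} τ_f(b_ν)(r² - |b_ν - x| r - b_ν x). -/
open Set

/-- `f` is tropical meromorphic: continuous, piecewise linear with one-sided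
slopes around every point, and `ω x` is the jump of the derivative at `x`
(right slope minus left slope); the jump points are discrete. -/
structure TropicalMero (f : ℝ → ℝ) (ω : ℝ → ℝ) : Prop where
  cont : Continuous f
  slopes : ∀ x : ℝ, ∃ ε > 0, ∃ sl sr : ℝ,
    (∀ y ∈ Set.Ioc (x - ε) x, f y = f x + sl * (y - x)) ∧
    (∀ y ∈ Set.Ico x (x + ε), f y = f x + sr * (y - x)) ∧
    sr - sl = ω x
  discrete : ∀ r : ℝ, 0 < r → (Function.support ω ∩ Set.Ioo (-r) r).Finite

/-- Tropical proximity function. -/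
noncomputable def mfun (f : ℝ → ℝ) (r : ℝ) : ℝ :=
  (max (f r) 0 + max (f (-r)) 0) / 2

/-- Tropical counting function for poles (points with `ω b < 0`) in `(-r, r)`. -/
noncomputable def Nfun (ω : ℝ → ℝ) (r : ℝ) : ℝ :=
  (1 / 2) * ∑ᶠ b ∈ {b : ℝ | b ∈ Set.Ioo (-r) r ∧ ω b < 0}, (-(ω b)) * (r - |b|)

/-- Tropical characteristic function. -/
noncomputable def Tfun (f ω : ℝ → ℝ) (r : ℝ) : ℝ := mfun f r + Nfun ω r

/-!
The function `G_c(z) = r² - |c - z| r - c z` is piecewise linear with a single kink at `c`, where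
its slope jumps by `-2r`, and it vanishes at `z = ±r` when `|c| ≤ r`. Hence
`g = f + (2r)⁻¹ ∑ ω(c) G_c`, summed over the finitely many kinks of `f` in `(-r, r)`, has no kink
left in `(-r, r)`, so it is affine on `[-r, r]`, and it agrees with `f` at `±r`. Writing the affine
function `g` through its values at `±r` is the formula.
-/

open Filter Topology Finset

def HasSlopeAtFilter (f : ℝ → ℝ) (m x : ℝ) (l : Filter ℝ) : Prop :=
  ∀ᶠ y in l, f y = f x + m * (y - x)

namespace HasSlopeAtFilter

variable {f g : ℝ → ℝ} {m n x : ℝ} {l : Filter ℝ}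

theorem add (hf : HasSlopeAtFilter f m x l) (hg : HasSlopeAtFilter g n x l) :
    HasSlopeAtFilter (fun z => f z + g z) (m + n) x l := by
  filter_upwards [hf, hg] with y hfy hgy
  rw [hfy, hgy]
  ring

theorem const_mul (a : ℝ) (hf : HasSlopeAtFilter f m x l) :
    HasSlopeAtFilter (fun z => a * f z) (a * m) x l := by
  filter_upwards [hf] with y hfy
  rw [hfy]
  ring

theorem sum {ι : Type*} (s : Finset ι) {F : ι → ℝ → ℝ} {M : ι → ℝ}
    (hF : ∀ i ∈ s, HasSlopeAtFilter (F i) (M i) x l) :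
    HasSlopeAtFilter (fun z => ∑ i ∈ s, F i z) (∑ i ∈ s, M i) x l := by
  filter_upwards [(eventually_all_finset s).2 hF] with y hy
  rw [Finset.sum_mul, ← Finset.sum_add_distrib]
  exact Finset.sum_congr rfl hy

theorem sup {l' : Filter ℝ} (h : HasSlopeAtFilter f m x l) (h' : HasSlopeAtFilter f m x l') :
    HasSlopeAtFilter f m x (l ⊔ l') :=
  eventually_sup.2 ⟨h, h'⟩

theorem hasDerivAt_of_nhds (h : HasSlopeAtFilter f m x (𝓝 x)) :
    ∀ᶠ z in 𝓝 x, HasDerivAt f m z := by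
  filter_upwards [h.eventually_nhds] with z hz
  have hline : HasDerivAt (fun y => f x + m * (y - x)) m z := by
    simpa using ((hasDerivAt_id z).sub_const x).const_mul m |>.const_add (f x)
  exact hline.congr_of_eventuallyEq hz

end HasSlopeAtFilter

theorem exists_eqOn_affine_of_hasSlopeAtFilter_nhds {g : ℝ → ℝ} {a b : ℝ} (hab : a < b)
    (hg : ContinuousOn g (Icc a b)) (hloc : ∀ y ∈ Ioo a b, ∃ m, HasSlopeAtFilter g m y (𝓝 y)) :
    ∃ m c, EqOn g (fun z => m * z + c) (Icc a b) := by
  have hderiv : ∀ y ∈ Ioo a b, ∃ m, ∀ᶠ z in 𝓝 y, HasDerivAt g m z := fun y hy =>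
    (hloc y hy).imp fun _ hm => hm.hasDerivAt_of_nhds
  have hdiff : DifferentiableOn ℝ g (Ioo a b) := fun y hy => by
    obtain ⟨m, hm⟩ := hderiv y hy
    exact hm.self_of_nhds.differentiableAt.differentiableWithinAt
  have hderiv2 : ∀ y ∈ Ioo a b, HasDerivAt (deriv g) 0 y := fun y hy => by
    obtain ⟨m, hm⟩ := hderiv y hy
    exact (hasDerivAt_const y m).congr_of_eventuallyEq (hm.mono fun z hz => hz.deriv)
  obtain ⟨m, hm⟩ := isOpen_Ioo.exists_is_const_of_deriv_eq_zero isPreconnected_Ioo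
    (fun y hy => (hderiv2 y hy).differentiableAt.differentiableWithinAt)
    (fun y hy => (hderiv2 y hy).deriv)
  obtain ⟨c, hc⟩ := isOpen_Ioo.exists_eq_add_of_deriv_eq (g := fun z => m * z)
    isPreconnected_Ioo hdiff (by fun_prop) (fun y hy => by simp [hm y hy])
  exact ⟨m, c, hc.of_subset_closure hg (by fun_prop) Ioo_subset_Icc_self
    (closure_Ioo hab.ne).symm.subset⟩

/-- The Green function of `d²/dz²` on `[-r, r]` with pole `c`, multiplied by `-2r`. -/
noncomputable def green (r c z : ℝ) : ℝ := r ^ 2 - |c - z| * r - c * z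

@[fun_prop]
theorem continuous_green (r c : ℝ) : Continuous (green r c) := by
  unfold green
  fun_prop

theorem green_eq_of_le {r c y z : ℝ} (hy : y ≤ c) (hz : z ≤ c) :
    green r c z = green r c y + (r - c) * (z - y) := by
  unfold green
  rw [abs_of_nonneg (sub_nonneg.2 hy), abs_of_nonneg (sub_nonneg.2 hz)]
  ring

theorem green_eq_of_ge {r c y z : ℝ} (hy : c ≤ y) (hz : c ≤ z) :
    green r c z = green r c y + -(r + c) * (z - y) := by
  unfold green
  rw [abs_of_nonpos (sub_nonpos.2 hy), abs_of_nonpos (sub_nonpos.2 hz)]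
  ring

theorem green_right_eq_zero {r c : ℝ} (hc : c ≤ r) : green r c r = 0 := by
  unfold green
  rw [abs_of_nonpos (by linarith)]
  ring

theorem green_neg_eq_zero {r c : ℝ} (hc : -r ≤ c) : green r c (-r) = 0 := by
  unfold green
  rw [abs_of_nonneg (by linarith)]
  ring

theorem hasSlopeAtFilter_green_nhdsLE (r c x : ℝ) :
    HasSlopeAtFilter (green r c) (if x ≤ c then r - c else -(r + c)) x (𝓝[≤] x) := by
  split_ifs with hxc
  · filter_upwards [self_mem_nhdsWithin] with y (hy : y ≤ x)
    exact green_eq_of_le hxc (hy.trans hxc)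
  · filter_upwards [eventually_nhdsWithin_of_eventually_nhds (lt_mem_nhds (not_le.1 hxc))]
      with y hy
    exact green_eq_of_ge (not_le.1 hxc).le hy.le

theorem hasSlopeAtFilter_green_nhdsGE (r c x : ℝ) :
    HasSlopeAtFilter (green r c) (if x < c then r - c else -(r + c)) x (𝓝[≥] x) := by
  split_ifs with hxc
  · filter_upwards [eventually_nhdsWithin_of_eventually_nhds (gt_mem_nhds hxc)] with y hy
    exact green_eq_of_le hxc.le hy.le
  · filter_upwards [self_mem_nhdsWithin] with y (hy : x ≤ y)
    exact green_eq_of_ge (not_lt.1 hxc) ((not_lt.1 hxc).trans hy)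

theorem green_slope_jump (r c x : ℝ) :
    ((if x < c then r - c else -(r + c)) - if x ≤ c then r - c else -(r + c))
      = if c = x then -(2 * r) else 0 := by
  rcases lt_trichotomy x c with hxc | rfl | hcx
  · simp [hxc, hxc.le, hxc.ne']
  · simp only [lt_irrefl, le_refl, if_true, if_false]
    ring
  · simp [not_lt.2 hcx.le, not_le.2 hcx, hcx.ne]

namespace TropicalMero

variable {f ω : ℝ → ℝ}

theorem exists_slopes (h : TropicalMero f ω) (x : ℝ) :
    ∃ sl sr, HasSlopeAtFilter f sl x (𝓝[≤] x) ∧ HasSlopeAtFilter f sr x (𝓝[≥] x) ∧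
      sr - sl = ω x := by
  obtain ⟨ε, hε, sl, sr, hL, hR, hω⟩ := h.slopes x
  refine ⟨sl, sr, ?_, ?_, hω⟩
  · filter_upwards [Ioc_mem_nhdsLE (by linarith : x - ε < x)] with y hy using hL y hy
  · filter_upwards [Ico_mem_nhdsGE (by linarith : x < x + ε)] with y hy using hR y hy

theorem exists_hasSlopeAtFilter_nhds_add_green (h : TropicalMero f ω) {r : ℝ} (hr : r ≠ 0)
    (s : Finset ℝ) {x : ℝ} (hx : ω x ≠ 0 → x ∈ s) :
    ∃ m, HasSlopeAtFilter (fun z => f z + (2 * r)⁻¹ * ∑ c ∈ s, ω c * green r c z) m x (𝓝 x) := by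
  obtain ⟨sl, sr, hfl, hfr, hjump⟩ := h.exists_slopes x
  have hsum_jump : ∑ c ∈ s, ω c * (if x < c then r - c else -(r + c))
      - ∑ c ∈ s, ω c * (if x ≤ c then r - c else -(r + c)) = -(2 * r) * ω x := by
    simp_rw [← Finset.sum_sub_distrib, ← mul_sub, green_slope_jump, mul_ite, mul_zero,
      Finset.sum_ite_eq']
    split_ifs with hxs
    · ring
    · rw [not_imp_comm.1 hx hxs, mul_zero]
  refine ⟨_, nhdsLE_sup_nhdsGE x ▸ ((hfl.add ((HasSlopeAtFilter.sum s fun c _ =>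
    (hasSlopeAtFilter_green_nhdsLE r c x).const_mul (ω c)).const_mul _)).sup ?_)⟩
  convert hfr.add ((HasSlopeAtFilter.sum s fun c _ =>
    (hasSlopeAtFilter_green_nhdsGE r c x).const_mul (ω c)).const_mul (2 * r)⁻¹) using 1
  field_simp
  linear_combination -(2 * r) * hjump - hsum_jump

end TropicalMero

theorem finsum_pos_sub_finsum_neg {ω φ : ℝ → ℝ} {S : Set ℝ}
    (hS : (Function.support ω ∩ S).Finite) :
    ∑ᶠ a ∈ {a | a ∈ S ∧ 0 < ω a}, ω a * φ a - ∑ᶠ b ∈ {b | b ∈ S ∧ ω b < 0}, -ω b * φ b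
      = ∑ c ∈ hS.toFinset, ω c * φ c := by
  classical
  have hpos : {a | a ∈ S ∧ 0 < ω a} = ↑(hS.toFinset.filter fun a => 0 < ω a) := by
    ext a
    simp only [mem_ofPred_eq, coe_filter, Finite.mem_toFinset]
    exact ⟨fun h => ⟨⟨h.2.ne', h.1⟩, h.2⟩, fun h => ⟨h.1.2, h.2⟩⟩
  have hneg : {b | b ∈ S ∧ ω b < 0} = ↑(hS.toFinset.filter fun b => ¬ 0 < ω b) := by
    ext b
    simp only [mem_ofPred_eq, coe_filter, Finite.mem_toFinset, not_lt]
    exact ⟨fun h => ⟨⟨h.2.ne, h.1⟩, h.2.le⟩, fun h => ⟨h.1.2, lt_of_le_of_ne h.2 h.1.1⟩⟩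
  rw [hpos, hneg, finsum_mem_coe_finset, finsum_mem_coe_finset,
    ← sum_filter_add_sum_filter_not hS.toFinset (fun a => 0 < ω a)]
  simp only [neg_mul, sum_neg_distrib, sub_neg_eq_add]

/-- Tropical Poisson–Jensen formula. -/
theorem stmt2 (f ω : ℝ → ℝ) (h : TropicalMero f ω) (r x : ℝ) (hr : 0 < r)
    (hx : x ∈ Set.Ioo (-r) r) :
    f x = (f r + f (-r)) / 2 + (x / (2 * r)) * (f r - f (-r))
      - (1 / (2 * r)) * ∑ᶠ a ∈ {a : ℝ | a ∈ Set.Ioo (-r) r ∧ 0 < ω a},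
          ω a * (r ^ 2 - |a - x| * r - a * x)
      + (1 / (2 * r)) * ∑ᶠ b ∈ {b : ℝ | b ∈ Set.Ioo (-r) r ∧ ω b < 0},
          (-(ω b)) * (r ^ 2 - |b - x| * r - b * x) := by
  have hfin := h.discrete r hr
  have hs_mem : ∀ c ∈ hfin.toFinset, c ∈ Ioo (-r) r := fun c hc => (hfin.mem_toFinset.1 hc).2
  have hcont := h.cont
  obtain ⟨m, k, hg⟩ := exists_eqOn_affine_of_hasSlopeAtFilter_nhds
    (g := fun z => f z + (2 * r)⁻¹ * ∑ c ∈ hfin.toFinset, ω c * green r c z) (neg_lt_self hr)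
    (by fun_prop)
    fun y hy => h.exists_hasSlopeAtFilter_nhds_add_green hr.ne' hfin.toFinset
      fun hy0 => hfin.mem_toFinset.2 ⟨hy0, hy⟩
  have hfr : f r = m * r + k := by
    have hsum : ∑ c ∈ hfin.toFinset, ω c * green r c r = 0 :=
      sum_eq_zero fun c hc => by rw [green_right_eq_zero (hs_mem c hc).2.le, mul_zero]
    simpa [hsum] using hg (right_mem_Icc.2 (neg_le_self hr.le))
  have hfnr : f (-r) = m * -r + k := by
    have hsum : ∑ c ∈ hfin.toFinset, ω c * green r c (-r) = 0 :=
      sum_eq_zero fun c hc => by rw [green_neg_eq_zero (hs_mem c hc).1.le, mul_zero]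
    simpa [hsum] using hg (left_mem_Icc.2 (neg_le_self hr.le))
  have hgx : f x + (2 * r)⁻¹ * ∑ c ∈ hfin.toFinset, ω c * green r c x = m * x + k :=
    hg (Ioo_subset_Icc_self hx)
  have hsplit := finsum_pos_sub_finsum_neg (φ := fun c => green r c x) hfin
  unfold green at hgx hsplit
  rw [hfr, hfnr]
  linear_combination hgx + (2 * r)⁻¹ * hsplit - x * m * mul_inv_cancel₀ hr.ne'
end

section
/- Let f be a continuous piecewise linear function on [-r, r] with distinct roots a_μ and poles b_ν in (-r, r). Then f(0) = (1/2)(f(r)+f(-r)) - (1/2) ∑_{|a_μ|<r} τ_f(a_μ)(r - |a_μ|) + (1/2) ∑_{|b_ν|<r} τ_f(b_ν)(r - |b_ν|). -/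
open Set

/-!
Subtracting `∑ ω(a)/2 · |x - a|` over the finitely many jump points `a ∈ (-r, r)` from `f` gives
a function `g` with no slope jump in `(-r, r)`, hence affine on `[-r, r]` (its derivative is
locally constant, so constant, and the mean value theorem applies). Then `2 g(0) = g(r) + g(-r)`,
and `|r - a| + |-r - a| - 2|a| = 2(r - |a|)` for `|a| < r` turns this into the formula.
-/

open Filter Topology

def HasSlopeJumpAt (f : ℝ → ℝ) (j x : ℝ) : Prop :=
  ∃ s : ℝ, (∀ᶠ y in 𝓝[≤] x, f y = f x + s * (y - x)) ∧
    ∀ᶠ y in 𝓝[≥] x, f y = f x + (s + j) * (y - x)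

namespace HasSlopeJumpAt

variable {f g : ℝ → ℝ} {j k x : ℝ}

theorem sub (hf : HasSlopeJumpAt f j x) (hg : HasSlopeJumpAt g k x) :
    HasSlopeJumpAt (fun y => f y - g y) (j - k) x := by
  obtain ⟨s, hfl, hfr⟩ := hf
  obtain ⟨t, hgl, hgr⟩ := hg
  refine ⟨s - t, ?_, ?_⟩
  · filter_upwards [hfl, hgl] with y hf hg
    rw [hf, hg]; ring
  · filter_upwards [hfr, hgr] with y hf hg
    rw [hf, hg]; ring

theorem const_mul (hf : HasSlopeJumpAt f j x) (c : ℝ) :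
    HasSlopeJumpAt (fun y => c * f y) (c * j) x := by
  obtain ⟨s, hl, hr⟩ := hf
  refine ⟨c * s, ?_, ?_⟩
  · filter_upwards [hl] with y hy
    rw [hy]; ring
  · filter_upwards [hr] with y hy
    rw [hy]; ring

theorem sum {ι : Type*} (T : Finset ι) {f : ι → ℝ → ℝ} {j : ι → ℝ}
    (h : ∀ i ∈ T, HasSlopeJumpAt (f i) (j i) x) :
    HasSlopeJumpAt (fun y => ∑ i ∈ T, f i y) (∑ i ∈ T, j i) x := by
  choose! s hl hr using h
  refine ⟨∑ i ∈ T, s i, ?_, ?_⟩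
  · filter_upwards [(eventually_all_finset T).2 hl] with y hy
    rw [Finset.sum_congr rfl hy, Finset.sum_add_distrib, Finset.sum_mul]
  · filter_upwards [(eventually_all_finset T).2 hr] with y hy
    simp only [Finset.sum_congr rfl hy, Finset.sum_add_distrib, Finset.sum_mul, add_mul]

end HasSlopeJumpAt

theorem hasSlopeJumpAt_zero_iff {f : ℝ → ℝ} {x : ℝ} :
    HasSlopeJumpAt f 0 x ↔ ∃ s, ∀ᶠ y in 𝓝 x, f y = f x + s * (y - x) := by
  simp only [HasSlopeJumpAt, add_zero, ← nhdsLE_sup_nhdsGE x, eventually_sup]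

theorem hasSlopeJumpAt_abs_sub (a x : ℝ) :
    HasSlopeJumpAt (fun y => |y - a|) (if x = a then 2 else 0) x := by
  rcases lt_trichotomy x a with hxa | rfl | hxa
  · rw [if_neg hxa.ne, hasSlopeJumpAt_zero_iff]
    refine ⟨-1, ?_⟩
    filter_upwards [eventually_lt_nhds hxa] with y hy
    rw [abs_of_neg (sub_neg.2 hy), abs_of_neg (sub_neg.2 hxa)]; ring
  · refine ⟨-1, ?_, ?_⟩
    · filter_upwards [self_mem_nhdsWithin] with y (hy : y ≤ x)
      rw [abs_of_nonpos (sub_nonpos.2 hy)]; simp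
    · filter_upwards [self_mem_nhdsWithin] with y (hy : x ≤ y)
      rw [abs_of_nonneg (sub_nonneg.2 hy)]; norm_num
  · rw [if_neg hxa.ne', hasSlopeJumpAt_zero_iff]
    refine ⟨1, ?_⟩
    filter_upwards [eventually_gt_nhds hxa] with y hy
    rw [abs_of_pos (sub_pos.2 hy), abs_of_pos (sub_pos.2 hxa)]; ring

theorem TropicalMero.hasSlopeJumpAt {f ω : ℝ → ℝ} (h : TropicalMero f ω) (x : ℝ) :
    HasSlopeJumpAt f (ω x) x := by
  obtain ⟨ε, hε, sl, sr, hl, hr, hj⟩ := h.slopes x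
  refine ⟨sl, mem_of_superset (Ioc_mem_nhdsLE (by linarith)) hl, ?_⟩
  rw [← hj, add_sub_cancel]
  exact mem_of_superset (Ico_mem_nhdsGE (by linarith)) hr

theorem eventually_hasDerivAt_of_eventually_affine {g : ℝ → ℝ} {x s : ℝ}
    (h : ∀ᶠ y in 𝓝 x, g y = g x + s * (y - x)) : ∀ᶠ y in 𝓝 x, HasDerivAt g s y := by
  filter_upwards [eventually_eventually_nhds.2 h] with y hy
  have : HasDerivAt (fun z => g x + s * (z - x)) s y := by
    simpa using ((hasDerivAt_id y).sub_const x).const_mul s |>.const_add (g x)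
  exact this.congr_of_eventuallyEq hy

theorem exists_eq_affine_of_eventually_affine {g : ℝ → ℝ} {a b : ℝ}
    (hg : ContinuousOn g (Icc a b))
    (h : ∀ x ∈ Ioo a b, ∃ s, ∀ᶠ y in 𝓝 x, g y = g x + s * (y - x)) :
    ∃ c, ∀ y ∈ Icc a b, g y = g a + c * (y - a) := by
  have hderiv : ∀ x ∈ Ioo a b, ∃ s, ∀ᶠ y in 𝓝 x, HasDerivAt g s y := fun x hx =>
    (h x hx).imp fun _ => eventually_hasDerivAt_of_eventually_affine
  have hg' : ∀ x ∈ Ioo a b, HasDerivAt g (deriv g x) x := fun x hx =>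
    (hderiv x hx).elim fun _ hs => hs.self_of_nhds.differentiableAt.hasDerivAt
  obtain ⟨c, hc⟩ : ∃ c, ∀ x ∈ Ioo a b, deriv g x = c := by
    refine isOpen_Ioo.exists_is_const_of_deriv_eq_zero isPreconnected_Ioo
      (fun x hx => ?_) (fun x hx => ?_)
    all_goals
      obtain ⟨s, hs⟩ := hderiv x hx
      have hds : deriv g =ᶠ[𝓝 x] fun _ => s := hs.mono fun y hy => hy.deriv
    · exact ((differentiableAt_const s).congr_of_eventuallyEq hds).differentiableWithinAt
    · simp [hds.deriv_eq]
  refine ⟨c, fun y hy => ?_⟩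
  rcases hy.1.eq_or_lt with rfl | hay
  · simp
  obtain ⟨z, hz, hslope⟩ := exists_hasDerivAt_eq_slope g (deriv g) hay
    (hg.mono (Icc_subset_Icc_right hy.2)) fun z hz => hg' z ⟨hz.1, hz.2.trans_le hy.2⟩
  rw [hc z ⟨hz.1, hz.2.trans_le hy.2⟩, eq_div_iff (sub_ne_zero.2 hay.ne')] at hslope
  linarith

theorem TropicalMero.eq_sub_finsum {f ω : ℝ → ℝ} (h : TropicalMero f ω) {r : ℝ} (hr : 0 < r) :
    f 0 = (f r + f (-r)) / 2 - (1 / 2) * ∑ᶠ a ∈ Ioo (-r) r, ω a * (r - |a|) := by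
  set T := (h.discrete r hr).toFinset
  have hT : ∀ a, a ∈ T ↔ ω a ≠ 0 ∧ a ∈ Ioo (-r) r := fun a => (h.discrete r hr).mem_toFinset
  rw [finsum_mem_eq_sum_of_inter_support_eq _ (t := T) (by
    ext a
    simp only [mem_inter_iff, Finset.mem_coe, hT, Function.mem_support]
    exact ⟨fun ⟨ha, hne⟩ => ⟨⟨left_ne_zero_of_mul hne, ha⟩, hne⟩, fun ⟨⟨_, ha⟩, hne⟩ => ⟨ha, hne⟩⟩)]
  set g : ℝ → ℝ := fun y => f y - ∑ a ∈ T, ω a / 2 * |y - a|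
  have hjump : ∀ x ∈ Ioo (-r) r, HasSlopeJumpAt g 0 x := by
    intro x hx
    convert (h.hasSlopeJumpAt x).sub
      (HasSlopeJumpAt.sum T fun a _ => (hasSlopeJumpAt_abs_sub a x).const_mul (ω a / 2)) using 1
    simp only [mul_ite, mul_zero, Finset.sum_ite_eq, hT]
    by_cases hωx : ω x = 0 <;> simp [hωx, hx]
  have hg : Continuous g := h.cont.sub (by fun_prop)
  obtain ⟨c, hc⟩ := exists_eq_affine_of_eventually_affine hg.continuousOn fun x hx => hasSlopeJumpAt_zero_iff.1 (hjump x hx)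
  have hg0 := hc 0 ⟨by linarith, hr.le⟩
  have hgr := hc r ⟨by linarith, le_rfl⟩
  have hsum : ∑ a ∈ T, ω a / 2 * |r - a| + ∑ a ∈ T, ω a / 2 * |-r - a|
      - 2 * ∑ a ∈ T, ω a / 2 * |0 - a| = ∑ a ∈ T, ω a * (r - |a|) := by
    rw [← Finset.sum_add_distrib, Finset.mul_sum, ← Finset.sum_sub_distrib]
    refine Finset.sum_congr rfl fun a ha => ?_
    obtain ⟨ha₁, ha₂⟩ := ((hT a).1 ha).2
    rw [abs_of_pos (by linarith : 0 < r - a), abs_of_neg (by linarith : -r - a < 0), zero_sub,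
      abs_neg]
    ring
  simp only [g] at hg0 hgr
  linarith

theorem finsum_mem_sep_pos_add_finsum_mem_sep_neg {α : Type*} {s : Set α} {w φ : α → ℝ}
    (hs : (s ∩ Function.support w).Finite) :
    ∑ᶠ a ∈ {a | a ∈ s ∧ 0 < w a}, w a * φ a + ∑ᶠ a ∈ {a | a ∈ s ∧ w a < 0}, w a * φ a
      = ∑ᶠ a ∈ s, w a * φ a := by
  rw [← finsum_mem_union _ (hs.subset fun a ha => ⟨ha.1, ha.2.ne'⟩)
    (hs.subset fun a ha => ⟨ha.1, ha.2.ne⟩)]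
  · refine finsum_mem_inter_support_eq' _ _ _ fun a ha => ?_
    exact ⟨fun h => h.elim And.left And.left,
      fun h => (left_ne_zero_of_mul ha).lt_or_gt.symm.imp (⟨h, ·⟩) (⟨h, ·⟩)⟩
  · exact Set.disjoint_left.2 fun a ha ha' => ha.2.not_gt ha'.2

/-- Tropical Jensen formula (Poisson–Jensen at x = 0). -/
theorem stmt3 (f ω : ℝ → ℝ) (h : TropicalMero f ω) (r : ℝ) (hr : 0 < r) :
    f 0 = (f r + f (-r)) / 2
      - (1 / 2) * ∑ᶠ a ∈ {a : ℝ | a ∈ Set.Ioo (-r) r ∧ 0 < ω a},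
          ω a * (r - |a|)
      + (1 / 2) * ∑ᶠ b ∈ {b : ℝ | b ∈ Set.Ioo (-r) r ∧ ω b < 0},
          (-(ω b)) * (r - |b|) := by
  have hfin : (Ioo (-r) r ∩ Function.support ω).Finite := inter_comm _ _ ▸ h.discrete r hr
  rw [h.eq_sub_finsum hr, ← finsum_mem_sep_pos_add_finsum_mem_sep_neg hfin]
  simp_rw [neg_mul]
  rw [finsum_mem_neg_distrib _ (hfin.subset fun a ha => ⟨ha.1, ha.2.ne⟩)]
  ring
end

section
/- Let f be tropical meromorphic and a ∈ ℝ. Then T(r, -max(f, a)) ≤ T(r, f) + max(a, 0) - max(f(0), a) for all r > 0. Moreover, if a < L_f := inf{ f(b) : b is a pole of f } (with L_f = +∞ if f has no poles), then T(r, -max(f, a)) = T(r, f) - max(f(0), a) + ε(r, a) with 0 ≤ ε(r, a) ≤ max(a, 0). -/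
open Set

def RightSlope (f : ℝ → ℝ) (x s : ℝ) : Prop :=
  ∃ ε > 0, ∀ y ∈ Set.Ico x (x + ε), f y = f x + s * (y - x)

def LeftSlope (f : ℝ → ℝ) (x s : ℝ) : Prop :=
  ∃ ε > 0, ∀ y ∈ Set.Ioc (x - ε) x, f y = f x + s * (y - x)

lemma RightSlope.unique {f : ℝ → ℝ} {x s t : ℝ} (hs : RightSlope f x s)
    (ht : RightSlope f x t) : s = t := by
  obtain ⟨ε, hε, h1⟩ := hs
  obtain ⟨δ, hδ, h2⟩ := ht
  have hmin : 0 < min ε δ := lt_min hε hδ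
  set y := x + min ε δ / 2 with hy
  have e1 := h1 y ⟨by simp [hy]; linarith, by simp [hy]; linarith [min_le_left ε δ]⟩
  have e2 := h2 y ⟨by simp [hy]; linarith, by simp [hy]; linarith [min_le_right ε δ]⟩
  have hne : y - x ≠ 0 := by simp [hy]; linarith
  have : s * (y - x) = t * (y - x) := by linarith
  exact mul_right_cancel₀ hne this

lemma LeftSlope.unique {f : ℝ → ℝ} {x s t : ℝ} (hs : LeftSlope f x s)
    (ht : LeftSlope f x t) : s = t := by
  obtain ⟨ε, hε, h1⟩ := hs
  obtain ⟨δ, hδ, h2⟩ := ht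
  have hmin : 0 < min ε δ := lt_min hε hδ
  set y := x - min ε δ / 2 with hy
  have e1 := h1 y ⟨by simp [hy]; linarith [min_le_left ε δ], by simp [hy]; linarith⟩
  have e2 := h2 y ⟨by simp [hy]; linarith [min_le_right ε δ], by simp [hy]; linarith⟩
  have hne : y - x ≠ 0 := by simp [hy]; linarith
  have : s * (y - x) = t * (y - x) := by linarith
  exact mul_right_cancel₀ hne this

lemma TropicalMero.slopes' {f ω : ℝ → ℝ} (H : TropicalMero f ω) (x : ℝ) :
    ∃ sl sr : ℝ, LeftSlope f x sl ∧ RightSlope f x sr ∧ sr - sl = ω x := by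
  obtain ⟨ε, hε, sl, sr, h1, h2, h3⟩ := H.slopes x
  exact ⟨sl, sr, ⟨ε, hε, h1⟩, ⟨ε, hε, h2⟩, h3⟩

lemma linear_of_no_kink {f ω : ℝ → ℝ} (H : TropicalMero f ω) {c d s : ℝ} (hcd : c < d)
    (hs : RightSlope f c s) (hω : ∀ x ∈ Set.Ioo c d, ω x = 0) :
    ∀ x ∈ Set.Icc c d, f x = f c + s * (x - c) := by
  set A := {x : ℝ | x ∈ Set.Icc c d ∧ ∀ y ∈ Set.Icc c x, f y = f c + s * (y - c)} with hA
  have hcA : c ∈ A := by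
    refine ⟨⟨le_rfl, hcd.le⟩, fun y hy => ?_⟩
    have : y = c := le_antisymm hy.2 hy.1
    simp [this]
  have hbdd : BddAbove A := ⟨d, fun x hx => hx.1.2⟩
  have hne : A.Nonempty := ⟨c, hcA⟩
  set t := sSup A with htdef
  have hct : c ≤ t := le_csSup hbdd hcA
  have htd : t ≤ d := csSup_le hne (fun x hx => hx.1.2)
  have hlt : ∀ y ∈ Set.Ico c t, f y = f c + s * (y - c) := by
    intro y hy
    obtain ⟨x, hxA, hyx⟩ := exists_lt_of_lt_csSup hne hy.2
    exact hxA.2 y ⟨hy.1, hyx.le⟩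
  have htE : f t = f c + s * (t - c) := by
    rcases eq_or_lt_of_le hct with h | h
    · simp [← h]
    · have hclosed : IsClosed {x : ℝ | f x = f c + s * (x - c)} :=
        isClosed_eq H.cont (continuous_const.add (continuous_const.mul (continuous_id.sub continuous_const)))
      have hmem : t ∈ closure (Set.Ico c t) := by
        rw [closure_Ico h.ne]
        exact ⟨hct, le_rfl⟩
      have hsub : Set.Ico c t ⊆ {x : ℝ | f x = f c + s * (x - c)} := by
        intro y hy; exact hlt y hy
      exact hclosed.closure_subset (closure_mono hsub hmem)
  have htA : t ∈ A := by
    refine ⟨⟨hct, htd⟩, fun y hy => ?_⟩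
    rcases eq_or_lt_of_le hy.2 with h | h
    · rw [h]; exact htE
    · exact hlt y ⟨hy.1, h⟩
  have htd' : t = d := by
    by_contra hne'
    have htd2 : t < d := lt_of_le_of_ne htd hne'
    obtain ⟨sl, sr, hL, hR, hj⟩ := H.slopes' t
    have hsr : sr = s := by
      rcases eq_or_lt_of_le hct with h | h
      · exact hR.unique (show RightSlope f t s by rw [← h]; exact hs)
      · have hLs : LeftSlope f t s := by
          refine ⟨t - c, by linarith, fun y hy => ?_⟩
          have h1 : f y = f c + s * (y - c) := htA.2 y ⟨by linarith [hy.1], hy.2⟩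
          rw [h1, htE]; ring
        have hsl : sl = s := hL.unique hLs
        have hω0 : ω t = 0 := hω t ⟨h, htd2⟩
        linarith [hj]
    obtain ⟨ε, hε, hRf⟩ := hR
    set t' := min (t + ε / 2) ((t + d) / 2) with ht'
    have htt' : t < t' := lt_min (by linarith) (by linarith)
    have ht'd : t' ≤ d := le_trans (min_le_right _ _) (by linarith)
    have ht'A : t' ∈ A := by
      refine ⟨⟨by linarith, ht'd⟩, fun y hy => ?_⟩
      rcases le_or_gt y t with h | h
      · exact htA.2 y ⟨hy.1, h⟩
      · have h2 : t' ≤ t + ε / 2 := min_le_left _ _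
        have hyε : y ∈ Set.Ico t (t + ε) := ⟨h.le, by
          have := hy.2; linarith⟩
        have := hRf y hyε
        rw [this, htE, hsr]; ring
    exact absurd (le_csSup hbdd ht'A) (not_le.mpr htt')
  intro x hx
  exact htA.2 x ⟨hx.1, by rw [htd']; exact hx.2⟩

lemma ftc {f ω : ℝ → ℝ} (H : TropicalMero f ω) :
    ∀ S : Finset ℝ, ∀ c d s : ℝ, c < d → RightSlope f c s →
      (∀ b, b ∈ S ↔ b ∈ Set.Ioo c d ∧ ω b ≠ 0) →
      f d = f c + s * (d - c) + ∑ b ∈ S, ω b * (d - b) := by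
  intro S
  induction S using Finset.strongInduction with
  | _ S ih =>
    intro c d s hcd hs hS
    rcases S.eq_empty_or_nonempty with rfl | hne
    · have hω : ∀ x ∈ Set.Ioo c d, ω x = 0 := by
        intro x hx
        by_contra hx0
        exact absurd ((hS x).2 ⟨hx, hx0⟩) (Finset.notMem_empty x)
      have := linear_of_no_kink H hcd hs hω d ⟨hcd.le, le_rfl⟩
      simpa using this
    · classical
      set b := S.min' hne with hbdef
      have hbS : b ∈ S := S.min'_mem hne
      obtain ⟨hbI, hbω⟩ := (hS b).1 hbS
      have hcb : c < b := hbI.1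
      have hbd : b < d := hbI.2
      have hω1 : ∀ x ∈ Set.Ioo c b, ω x = 0 := by
        intro x hx
        by_contra hx0
        have hxS : x ∈ S := (hS x).2 ⟨⟨hx.1, hx.2.trans hbd⟩, hx0⟩
        exact absurd (S.min'_le x hxS) (not_le.mpr hx.2)
      have hlin : ∀ x ∈ Set.Icc c b, f x = f c + s * (x - c) :=
        linear_of_no_kink H hcb hs hω1
      have hfb : f b = f c + s * (b - c) := hlin b ⟨hcb.le, le_rfl⟩
      obtain ⟨sl, sr, hL, hR, hj⟩ := H.slopes' b
      have hLs : LeftSlope f b s := by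
        refine ⟨b - c, by linarith, fun y hy => ?_⟩
        have := hlin y ⟨by linarith [hy.1], hy.2⟩
        rw [this, hfb]; ring
      have hsl : sl = s := hL.unique hLs
      have hsr : sr = s + ω b := by rw [← hj, hsl]; ring
      have hS' : ∀ x, x ∈ S.erase b ↔ x ∈ Set.Ioo b d ∧ ω x ≠ 0 := by
        intro x
        constructor
        · intro hx
          obtain ⟨hxb, hxS⟩ := Finset.mem_erase.1 hx
          obtain ⟨hxI, hxω⟩ := (hS x).1 hxS
          exact ⟨⟨lt_of_le_of_ne (S.min'_le x hxS) (Ne.symm hxb), hxI.2⟩, hxω⟩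
        · intro ⟨hxI, hxω⟩
          refine Finset.mem_erase.2 ⟨ne_of_gt hxI.1, (hS x).2 ⟨⟨hcb.trans hxI.1, hxI.2⟩, hxω⟩⟩
      have hIH := ih (S.erase b) (Finset.erase_ssubset hbS) b d (s + ω b) hbd
        (by rw [← hsr]; exact hR) hS'
      rw [hIH, hfb, ← Finset.add_sum_erase S _ hbS]
      ring


lemma tm_comp_neg {f ω : ℝ → ℝ} (H : TropicalMero f ω) :
    TropicalMero (fun x => f (-x)) (fun x => ω (-x)) := by
  constructor
  · exact H.cont.comp continuous_neg
  · intro x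
    obtain ⟨ε, hε, sl, sr, h1, h2, h3⟩ := H.slopes (-x)
    refine ⟨ε, hε, -sr, -sl, fun y hy => ?_, fun y hy => ?_, by linarith⟩
    · have : -y ∈ Set.Ico (-x) (-x + ε) := ⟨by linarith [hy.2], by linarith [hy.1]⟩
      have := h2 (-y) this
      simp only [this]; ring
    · have : -y ∈ Set.Ioc (-x - ε) (-x) := ⟨by linarith [hy.2], by linarith [hy.1]⟩
      have := h1 (-y) this
      simp only [this]; ring
  · intro r hr
    have : Function.support (fun x => ω (-x)) ∩ Set.Ioo (-r) r
        = Neg.neg '' (Function.support ω ∩ Set.Ioo (-r) r) := by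
      ext x
      simp only [Set.mem_inter_iff, Function.mem_support, Set.mem_Ioo, Set.mem_image]
      constructor
      · rintro ⟨h1, h2, h3⟩
        exact ⟨-x, ⟨h1, by linarith, by linarith⟩, by ring⟩
      · rintro ⟨y, ⟨h1, h2, h3⟩, rfl⟩
        exact ⟨by simpa using h1, by linarith, by linarith⟩
    rw [this]
    exact (H.discrete r hr).image _

lemma jensen_core {f ω : ℝ → ℝ} (H : TropicalMero f ω) {r : ℝ} (hr : 0 < r)
    (S : Finset ℝ) (hS : ∀ b, b ∈ S ↔ b ∈ Set.Ioo (-r) r ∧ ω b ≠ 0) :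
    f r + f (-r) - 2 * f 0 = ∑ b ∈ S, ω b * (r - |b|) := by
  classical
  obtain ⟨sl, sr, hL, hR, hj⟩ := H.slopes' 0
  -- positive side
  have hSp : ∀ b, b ∈ S.filter (fun b => 0 < b) ↔ b ∈ Set.Ioo 0 r ∧ ω b ≠ 0 := by
    intro b
    simp only [Finset.mem_filter, hS b, Set.mem_Ioo]
    constructor
    · rintro ⟨⟨⟨h1, h2⟩, h3⟩, h4⟩; exact ⟨⟨h4, h2⟩, h3⟩
    · rintro ⟨⟨h1, h2⟩, h3⟩; exact ⟨⟨⟨by linarith, h2⟩, h3⟩, h1⟩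
  have hpos := ftc H (S.filter (fun b => 0 < b)) 0 r sr hr hR hSp
  -- negative side
  set g := fun x => f (-x) with hg
  have Hg := tm_comp_neg H
  have hRg : RightSlope g 0 (-sl) := by
    obtain ⟨ε, hε, h1⟩ := hL
    refine ⟨ε, hε, fun y hy => ?_⟩
    have : -y ∈ Set.Ioc (0 - ε) 0 := ⟨by linarith [hy.2], by linarith [hy.1]⟩
    have := h1 (-y) this
    simp only [hg, this]; ring
  set Sm := (S.filter (fun b => b < 0)).image (fun x => -x) with hSm
  have hSmm : ∀ b, b ∈ Sm ↔ b ∈ Set.Ioo 0 r ∧ (fun x => ω (-x)) b ≠ 0 := by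
    intro b
    simp only [hSm, Finset.mem_image, Finset.mem_filter, hS, Set.mem_Ioo]
    constructor
    · rintro ⟨y, ⟨⟨⟨h1, h2⟩, h3⟩, h4⟩, rfl⟩
      exact ⟨⟨by linarith, by linarith⟩, by simpa using h3⟩
    · rintro ⟨⟨h1, h2⟩, h3⟩
      exact ⟨-b, ⟨⟨⟨by linarith, by linarith⟩, by simpa using h3⟩, by linarith⟩, by ring⟩
  have hneg := ftc Hg Sm 0 r (-sl) hr hRg hSmm
  have hinj : Set.InjOn (fun x : ℝ => -x) (S.filter (fun b => b < 0)) :=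
    fun x _ y _ h => by simpa using h
  have hsum_neg : ∑ x ∈ Sm, ω (-x) * (r - x)
      = ∑ b ∈ S.filter (fun b => b < 0), ω b * (r - |b|) := by
    rw [hSm, Finset.sum_image (fun x hx y hy h => hinj hx hy h)]
    refine Finset.sum_congr rfl (fun x hx => ?_)
    have hx0 : x < 0 := (Finset.mem_filter.1 hx).2
    rw [abs_of_neg hx0]
    ring
  have hsum_pos : ∑ b ∈ S.filter (fun b => 0 < b), ω b * (r - b)
      = ∑ b ∈ S.filter (fun b => 0 < b), ω b * (r - |b|) := by
    refine Finset.sum_congr rfl (fun x hx => ?_)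
    have hx0 : 0 < x := (Finset.mem_filter.1 hx).2
    rw [abs_of_pos hx0]
  -- split S
  have hsplit : ∑ b ∈ S, ω b * (r - |b|)
      = (∑ b ∈ S.filter (fun b => b = 0), ω b * (r - |b|))
        + ((∑ b ∈ S.filter (fun b => 0 < b), ω b * (r - |b|))
          + ∑ b ∈ S.filter (fun b => b < 0), ω b * (r - |b|)) := by
    rw [← Finset.sum_filter_add_sum_filter_not S (fun b => b = 0)]
    congr 1
    rw [← Finset.sum_filter_add_sum_filter_not (S.filter (fun b => ¬ b = 0)) (fun b => 0 < b)]
    congr 1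
    · rw [Finset.filter_filter]
      refine Finset.sum_congr (Finset.filter_congr (fun x _ => ?_)) (fun _ _ => rfl)
      constructor
      · rintro ⟨h1, h2⟩; exact h2
      · intro h; exact ⟨by linarith, h⟩
    · rw [Finset.filter_filter]
      refine Finset.sum_congr (Finset.filter_congr (fun x _ => ?_)) (fun _ _ => rfl)
      constructor
      · rintro ⟨h1, h2⟩
        rcases lt_trichotomy x 0 with h | h | h
        · exact h
        · exact absurd h h1
        · exact absurd h h2
      · intro h; exact ⟨by linarith, by linarith⟩
  have hzero : ∑ b ∈ S.filter (fun b => b = 0), ω b * (r - |b|) = ω 0 * r := by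
    by_cases h0 : (0 : ℝ) ∈ S
    · have : S.filter (fun b => b = 0) = {0} := by
        ext x
        simp only [Finset.mem_filter, Finset.mem_singleton]
        constructor
        · rintro ⟨_, rfl⟩; rfl
        · rintro rfl; exact ⟨h0, rfl⟩
      rw [this]
      simp
    · have hω0 : ω 0 = 0 := by
        by_contra h
        exact h0 ((hS 0).2 ⟨⟨by linarith, hr⟩, h⟩)
      have : S.filter (fun b => b = 0) = ∅ := by
        ext x
        simp only [Finset.mem_filter, Finset.notMem_empty, iff_false, not_and]
        rintro hx rfl
        exact h0 hx
      rw [this, hω0]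
      simp
  have hj0 : sr - sl = ω 0 := hj
  rw [hsplit, hzero, ← hsum_pos, ← hsum_neg]
  simp only [neg_zero, sub_zero] at hneg hpos
  have hmul : sr * r - sl * r = ω 0 * r := by rw [← hj0]; ring
  linarith [hpos, hneg]

lemma Nfun_eq (ω : ℝ → ℝ) (r : ℝ) (S : Finset ℝ)
    (hS : ∀ b, b ∈ S ↔ b ∈ Set.Ioo (-r) r ∧ ω b ≠ 0) [DecidablePred fun b => ω b < 0] :
    Nfun ω r = (1 / 2) * ∑ b ∈ S.filter (fun b => ω b < 0), (-(ω b)) * (r - |b|) := by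
  have hset : {b : ℝ | b ∈ Set.Ioo (-r) r ∧ ω b < 0}
      = ↑(S.filter (fun b => ω b < 0)) := by
    ext b
    simp only [Set.mem_setOf_eq, Finset.coe_filter, hS b]
    constructor
    · rintro ⟨h1, h2⟩; exact ⟨⟨h1, ne_of_lt h2⟩, h2⟩
    · rintro ⟨⟨h1, _⟩, h2⟩; exact ⟨h1, h2⟩
  rw [Nfun, hset, finsum_mem_coe_finset]

lemma tm_neg {f ω : ℝ → ℝ} (H : TropicalMero f ω) :
    TropicalMero (fun x => -f x) (fun x => -ω x) := by
  constructor
  · exact H.cont.neg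
  · intro x
    obtain ⟨ε, hε, sl, sr, h1, h2, h3⟩ := H.slopes x
    refine ⟨ε, hε, -sl, -sr, fun y hy => ?_, fun y hy => ?_, by linarith⟩
    · have := h1 y hy; rw [this]; ring
    · have := h2 y hy; rw [this]; ring
  · intro r hr
    have : Function.support (fun x => -ω x) = Function.support ω := by
      ext x; simp [Function.mem_support]
    rw [this]
    exact H.discrete r hr

lemma jensen {f ω : ℝ → ℝ} (H : TropicalMero f ω) {r : ℝ} (hr : 0 < r) :
    Tfun f ω r = Tfun (fun x => -f x) (fun x => -ω x) r + f 0 := by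
  classical
  set S := (H.discrete r hr).toFinset with hSdef
  have hS : ∀ b, b ∈ S ↔ b ∈ Set.Ioo (-r) r ∧ ω b ≠ 0 := by
    intro b
    rw [hSdef, Set.Finite.mem_toFinset]
    simp [Function.mem_support, and_comm]
  have hS' : ∀ b, b ∈ S ↔ b ∈ Set.Ioo (-r) r ∧ (fun x => -ω x) b ≠ 0 := by
    intro b
    rw [hS b]
    simp
  have hcore := jensen_core H hr S hS
  have hN1 := Nfun_eq ω r S hS
  have hN2 := Nfun_eq (fun x => -ω x) r S hS'
  have hfilt : S.filter (fun b => (fun x => -ω x) b < 0) = S.filter (fun b => 0 < ω b) := by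
    refine Finset.filter_congr (fun x _ => ?_)
    simp
  have hnn : ∑ b ∈ S.filter (fun b => (fun x => -ω x) b < 0), (-(((fun x => -ω x)) b)) * (r - |b|)
      = ∑ b ∈ S.filter (fun b => 0 < ω b), ω b * (r - |b|) := by
    rw [hfilt]
    refine Finset.sum_congr rfl (fun x _ => ?_)
    simp
  have hnsum : ∑ b ∈ S.filter (fun b => ω b < 0), (-(ω b)) * (r - |b|)
      = -∑ b ∈ S.filter (fun b => ω b < 0), ω b * (r - |b|) := by
    rw [← Finset.sum_neg_distrib]
    refine Finset.sum_congr rfl (fun x _ => ?_)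
    ring
  have hsplit : ∑ b ∈ S.filter (fun b => ω b < 0), ω b * (r - |b|)
      + ∑ b ∈ S.filter (fun b => 0 < ω b), ω b * (r - |b|) = ∑ b ∈ S, ω b * (r - |b|) := by
    rw [← Finset.sum_filter_add_sum_filter_not S (fun b => ω b < 0)]
    congr 1
    refine Finset.sum_congr (Finset.filter_congr (fun x hx => ?_)) (fun _ _ => rfl)
    have := ((hS x).1 hx).2
    constructor
    · intro h; exact not_lt.2 h.le
    · intro h; exact lt_of_le_of_ne (not_lt.1 h) (Ne.symm this)
  -- m part
  have hm : mfun f r - mfun (fun x => -f x) r = (f r + f (-r)) / 2 := by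
    simp only [mfun]
    have h1 : max (f r) 0 - max (-f r) 0 = f r := by
      rcases le_total (f r) 0 with h | h
      · rw [max_eq_right h, max_eq_left (by linarith)]; ring
      · rw [max_eq_left h, max_eq_right (by linarith)]; ring
    have h2 : max (f (-r)) 0 - max (-f (-r)) 0 = f (-r) := by
      rcases le_total (f (-r)) 0 with h | h
      · rw [max_eq_right h, max_eq_left (by linarith)]; ring
      · rw [max_eq_left h, max_eq_right (by linarith)]; ring
    linarith
  simp only [Tfun]
  rw [hN1, hN2, hnn, hnsum]
  have := hsplit
  linarith [hcore, hm, hsplit]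

lemma myMaxMulNonpos {s t : ℝ} (ht : t ≤ 0) : max (s * t) 0 = min s 0 * t := by
  rcases le_total s 0 with h | h
  · rw [min_eq_left h, max_eq_left (by nlinarith)]
  · rw [min_eq_right h, max_eq_right (by nlinarith)]
    simp

lemma myMaxMulNonneg {s t : ℝ} (ht : 0 ≤ t) : max (s * t) 0 = max s 0 * t := by
  rcases le_total s 0 with h | h
  · rw [max_eq_right (show s ≤ (0:ℝ) from h), max_eq_right (by nlinarith)]
    simp
  · rw [max_eq_left h, max_eq_left (by nlinarith)]

lemma max_add_aux (a M : ℝ) : max (a + M) a = a + max M 0 := by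
  have := max_add_add_left a M 0
  simpa using this

lemma slopeF1 {f ω ωg : ℝ → ℝ} (H : TropicalMero f ω) {a : ℝ}
    (Hg : TropicalMero (fun x => -max (f x) a) ωg) {b : ℝ} (hb : a < f b) :
    ωg b = -ω b := by
  obtain ⟨sl, sr, hL, hR, hj⟩ := H.slopes' b
  obtain ⟨δ, hδ, hball⟩ := Metric.isOpen_iff.mp (isOpen_lt continuous_const H.cont) b hb
  have hgt : ∀ y : ℝ, |y - b| < δ → a < f y := fun y hy =>
    hball (by simpa [Metric.mem_ball, Real.dist_eq] using hy)
  have hgb : -max (f b) a = -f b := by rw [max_eq_left hb.le]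
  have hLg : LeftSlope (fun x => -max (f x) a) b (-sl) := by
    obtain ⟨ε, hε, h1⟩ := hL
    refine ⟨min ε δ, lt_min hε hδ, fun y hy => ?_⟩
    have hy1 : y ∈ Set.Ioc (b - ε) b := ⟨by linarith [hy.1, min_le_left ε δ], hy.2⟩
    have hy2 : |y - b| < δ := by
      rw [abs_of_nonpos (by linarith [hy.2])]
      linarith [min_le_right ε δ, hy.1]
    have hval := h1 y hy1
    have hfy : a < f y := hgt y hy2
    show -max (f y) a = -max (f b) a + -sl * (y - b)
    rw [max_eq_left hfy.le, hgb, hval]; ring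
  have hRg : RightSlope (fun x => -max (f x) a) b (-sr) := by
    obtain ⟨ε, hε, h1⟩ := hR
    refine ⟨min ε δ, lt_min hε hδ, fun y hy => ?_⟩
    have hy1 : y ∈ Set.Ico b (b + ε) := ⟨hy.1, by linarith [hy.2, min_le_left ε δ]⟩
    have hy2 : |y - b| < δ := by
      rw [abs_of_nonneg (by linarith [hy.1])]
      linarith [min_le_right ε δ, hy.2]
    have hval := h1 y hy1
    have hfy : a < f y := hgt y hy2
    show -max (f y) a = -max (f b) a + -sr * (y - b)
    rw [max_eq_left hfy.le, hgb, hval]; ring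
  obtain ⟨tl, tr, hLg', hRg', hj'⟩ := Hg.slopes' b
  have h1 : tl = -sl := hLg'.unique hLg
  have h2 : tr = -sr := hRg'.unique hRg
  rw [← hj', h1, h2, ← hj]; ring

lemma slopeF2 {f ω ωg : ℝ → ℝ} (H : TropicalMero f ω) {a : ℝ}
    (Hg : TropicalMero (fun x => -max (f x) a) ωg) {b : ℝ} (hb : f b ≤ a) :
    ωg b ≤ 0 := by
  obtain ⟨sl, sr, hL, hR, hj⟩ := H.slopes' b
  obtain ⟨tl, tr, hLg', hRg', hj'⟩ := Hg.slopes' b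
  rcases eq_or_lt_of_le hb with heq | hlt
  · -- f b = a
    have hgb : -max (f b) a = -a := by rw [heq, max_self]
    have hLg : LeftSlope (fun x => -max (f x) a) b (-(min sl 0)) := by
      obtain ⟨ε, hε, h1⟩ := hL
      refine ⟨ε, hε, fun y hy => ?_⟩
      have hval := h1 y hy
      show -max (f y) a = -max (f b) a + -(min sl 0) * (y - b)
      rw [hgb, hval, heq, max_add_aux, myMaxMulNonpos (by linarith [hy.2])]
      ring
    have hRg : RightSlope (fun x => -max (f x) a) b (-(max sr 0)) := by
      obtain ⟨ε, hε, h1⟩ := hR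
      refine ⟨ε, hε, fun y hy => ?_⟩
      have hval := h1 y hy
      show -max (f y) a = -max (f b) a + -(max sr 0) * (y - b)
      rw [hgb, hval, heq, max_add_aux, myMaxMulNonneg (by linarith [hy.1])]
      ring
    have h1 : tl = -(min sl 0) := hLg'.unique hLg
    have h2 : tr = -(max sr 0) := hRg'.unique hRg
    rw [← hj', h1, h2]
    have := le_max_right sr (0:ℝ)
    have := min_le_right sl (0:ℝ)
    linarith
  · -- f b < a
    obtain ⟨δ, hδ, hball⟩ := Metric.isOpen_iff.mp (isOpen_lt H.cont continuous_const) b hlt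
    have hltf : ∀ y : ℝ, |y - b| < δ → f y < a := fun y hy =>
      hball (by simpa [Metric.mem_ball, Real.dist_eq] using hy)
    have hgb : -max (f b) a = -a := by rw [max_eq_right hlt.le]
    have hLg : LeftSlope (fun x => -max (f x) a) b 0 := by
      refine ⟨δ, hδ, fun y hy => ?_⟩
      have hy2 : |y - b| < δ := by
        rw [abs_of_nonpos (by linarith [hy.2])]; linarith [hy.1]
      show -max (f y) a = -max (f b) a + 0 * (y - b)
      rw [max_eq_right (hltf y hy2).le, hgb]; ring
    have hRg : RightSlope (fun x => -max (f x) a) b 0 := by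
      refine ⟨δ, hδ, fun y hy => ?_⟩
      have hy2 : |y - b| < δ := by
        rw [abs_of_nonneg (by linarith [hy.1])]; linarith [hy.2]
      show -max (f y) a = -max (f b) a + 0 * (y - b)
      rw [max_eq_right (hltf y hy2).le, hgb]; ring
    have h1 : tl = 0 := hLg'.unique hLg
    have h2 : tr = 0 := hRg'.unique hRg
    rw [← hj', h1, h2]
    norm_num


/-- Tropical first main theorem. Here `g = -max(f, a) = 1∘ ⊘ (f ⊕ a)` with
derivative-jump function `ωg`, and `a < L_f` is expressed as: `a < f b` for
every pole `b` of `f` (vacuously true if `f` has no poles). -/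
theorem stmt6 (f ω : ℝ → ℝ) (h : TropicalMero f ω) (a : ℝ)
    (g ωg : ℝ → ℝ) (hgdef : g = fun x => -max (f x) a) (hg : TropicalMero g ωg)
    (r : ℝ) (hr : 0 < r) :
    Tfun g ωg r ≤ Tfun f ω r + max a 0 - max (f 0) a ∧
    ((∀ b : ℝ, ω b < 0 → a < f b) →
      0 ≤ Tfun g ωg r - (Tfun f ω r - max (f 0) a) ∧
      Tfun g ωg r - (Tfun f ω r - max (f 0) a) ≤ max a 0) := by
  classical
  subst hgdef
  have hneg : TropicalMero (fun x => max (f x) a) (fun x => -ωg x) := by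
    have := tm_neg hg
    simpa using this
  have hJ : Tfun (fun x => max (f x) a) (fun x => -ωg x) r
      = Tfun (fun x => -max (f x) a) ωg r + max (f 0) a := by
    simpa using jensen hneg hr
  -- counting function comparison
  set Sf := (h.discrete r hr).toFinset with hSfdef
  set Sg := (hg.discrete r hr).toFinset with hSgdef
  have hSf : ∀ b, b ∈ Sf ↔ b ∈ Set.Ioo (-r) r ∧ ω b ≠ 0 := by
    intro b
    rw [hSfdef, Set.Finite.mem_toFinset]
    simp [Function.mem_support, and_comm]
  have hSg : ∀ b, b ∈ Sg ↔ b ∈ Set.Ioo (-r) r ∧ (fun x => -ωg x) b ≠ 0 := by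
    intro b
    rw [hSgdef, Set.Finite.mem_toFinset]
    simp [Function.mem_support, and_comm]
  have hNf := Nfun_eq ω r Sf hSf
  have hNg := Nfun_eq (fun x => -ωg x) r Sg hSg
  set A := Sg.filter (fun b => (fun x => -ωg x) b < 0) with hAdef
  set B := Sf.filter (fun b => ω b < 0) with hBdef
  have hmemA : ∀ b, b ∈ A → b ∈ Set.Ioo (-r) r ∧ 0 < ωg b := by
    intro b hb
    obtain ⟨h1, h2⟩ := Finset.mem_filter.1 hb
    exact ⟨((hSg b).1 h1).1, by simpa using h2⟩
  have hfgt : ∀ b, 0 < ωg b → a < f b := by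
    intro b hb
    by_contra hc
    exact absurd (slopeF2 h hg (not_lt.1 hc)) (not_le.2 hb)
  have hAB : A ⊆ B := by
    intro b hb
    obtain ⟨hIoo, hpos⟩ := hmemA b hb
    have hfb : a < f b := hfgt b hpos
    have hωb : ω b = -ωg b := by
      have := slopeF1 h hg hfb
      linarith
    refine Finset.mem_filter.2 ⟨(hSf b).2 ⟨hIoo, by rw [hωb]; simpa using ne_of_gt hpos⟩, ?_⟩
    rw [hωb]; linarith
  have htermA : ∀ b ∈ A, (- -ωg b) * (r - |b|) = (-(ω b)) * (r - |b|) := by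
    intro b hb
    obtain ⟨hIoo, hpos⟩ := hmemA b hb
    have hh := slopeF1 h hg (hfgt b hpos)
    rw [neg_neg, hh]
  have hnonnegB : ∀ b ∈ B, 0 ≤ (-(ω b)) * (r - |b|) := by
    intro b hb
    obtain ⟨h1, h2⟩ := Finset.mem_filter.1 hb
    have hIoo := ((hSf b).1 h1).1
    have habs : |b| < r := abs_lt.2 ⟨hIoo.1, hIoo.2⟩
    have : (0:ℝ) ≤ -(ω b) := by linarith
    nlinarith
  have hsumA : ∑ b ∈ A, (- -ωg b) * (r - |b|) = ∑ b ∈ A, (-(ω b)) * (r - |b|) :=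
    Finset.sum_congr rfl htermA
  have hNle : Nfun (fun x => -ωg x) r ≤ Nfun ω r := by
    rw [hNf, hNg]
    have hle : ∑ b ∈ A, (-(ω b)) * (r - |b|) ≤ ∑ b ∈ B, (-(ω b)) * (r - |b|) :=
      Finset.sum_le_sum_of_subset_of_nonneg hAB (fun b hb _ => hnonnegB b hb)
    linarith [hsumA, hle]
  -- m comparison
  have p1 : ∀ x : ℝ, max x 0 ≤ max (max x a) 0 := fun x => max_le_max (le_max_left x a) le_rfl
  have p2 : ∀ x : ℝ, max (max x a) 0 ≤ max x 0 + max a 0 := by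
    intro x
    refine max_le (max_le ?_ ?_) ?_
    · linarith [le_max_left x (0:ℝ), le_max_right a (0:ℝ)]
    · linarith [le_max_left a (0:ℝ), le_max_right x (0:ℝ)]
    · linarith [le_max_right x (0:ℝ), le_max_right a (0:ℝ)]
  have hm1 : mfun f r ≤ mfun (fun x => max (f x) a) r := by
    simp only [mfun]
    have := p1 (f r); have := p1 (f (-r))
    linarith
  have hm2 : mfun (fun x => max (f x) a) r ≤ mfun f r + max a 0 := by
    simp only [mfun]
    have := p2 (f r); have := p2 (f (-r))
    linarith
  have hTg : Tfun (fun x => -max (f x) a) ωg r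
      = mfun (fun x => max (f x) a) r + Nfun (fun x => -ωg x) r - max (f 0) a := by
    have : Tfun (fun x => max (f x) a) (fun x => -ωg x) r
        = mfun (fun x => max (f x) a) r + Nfun (fun x => -ωg x) r := rfl
    linarith [hJ, this]
  constructor
  · have : Tfun f ω r = mfun f r + Nfun ω r := rfl
    linarith [hTg, hm2, hNle, this]
  · intro hyp
    have hBA : B ⊆ A := by
      intro b hb
      obtain ⟨h1, h2⟩ := Finset.mem_filter.1 hb
      have hIoo := ((hSf b).1 h1).1
      have hfb : a < f b := hyp b h2
      have hωg : ωg b = -ω b := slopeF1 h hg hfb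
      refine Finset.mem_filter.2 ⟨(hSg b).2 ⟨hIoo, ?_⟩, ?_⟩
      · show -ωg b ≠ 0
        rw [hωg, neg_neg]
        exact ne_of_lt h2
      · show -ωg b < 0
        rw [hωg, neg_neg]
        exact h2
    have hABeq : A = B := Finset.Subset.antisymm hAB hBA
    have hNeq : Nfun (fun x => -ωg x) r = Nfun ω r := by
      rw [hNf, hNg, hsumA, hABeq]
    have : Tfun f ω r = mfun f r + Nfun ω r := rfl
    constructor
    · linarith [hTg, hm1, hNeq, this]
    · linarith [hTg, hm2, hNeq, this]
end

section
/- Any nonconstant continuous piecewise linear 1-periodic function f: ℝ → ℝ satisfies T(r, f) ≍ κ r² for some κ > 0 (i.e. there are positive constants c₁ ≤ c₂ with c₁ r² ≤ T(r, f) ≤ c₂ r² for all large r); in particular f is of order ρ(f) = limsup_{r→∞} log T(r, f) / log r = 2. -/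
open Set

/-! The jump function `ω` is determined by `f`, so it is 1-periodic along with `f`. A nonconstant
`f` has a pole: at a global maximum the left slope is `≥ 0` and the right slope `≤ 0`, so if no
jump were negative the set of maximum points would be open, hence everything. A pole `b` then
produces the poles `fract b + k` for `k < ⌊r/2⌋₊`, each contributing at least `-ω b · r/2` to the
counting sum, so `N(r) ≳ r²`; conversely `(-r, r)` contains `O(r)` poles of bounded multiplicity,
so `N(r) ≲ r²`. Since `f` is bounded, `m(r)` is bounded and `T(r) ≍ r²`, whence
`log T(r) / log r → 2`. -/

open Filter Topology Function

lemma eq_of_eventually_eq_affine {f : ℝ → ℝ} {l : Filter ℝ} [l.NeBot] {x s s' : ℝ}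
    (hx : ∀ᶠ y in l, y ≠ x) (h : ∀ᶠ y in l, f y = f x + s * (y - x))
    (h' : ∀ᶠ y in l, f y = f x + s' * (y - x)) : s = s' := by
  obtain ⟨y, hy, hs, hs'⟩ := (hx.and (h.and h')).exists
  exact mul_right_cancel₀ (sub_ne_zero.2 hy) (by linarith)

lemma Function.Periodic.map_fract {R α : Type*} [Ring R] [LinearOrder R] [IsStrictOrderedRing R]
    [FloorRing R] {f : R → α} (hf : Periodic f 1) (x : R) :
    f (Int.fract x) = f x := by
  simpa only [mul_one, Int.self_sub_floor] using hf.sub_int_mul_eq (x := x) ⌊x⌋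

lemma Function.Periodic.fract_mem_support_inter_Ico {R M : Type*} [Ring R] [LinearOrder R]
    [IsStrictOrderedRing R] [FloorRing R] [Zero M] {ω : R → M} (hω : Periodic ω 1) {p : R}
    (hp : ω p ≠ 0) : Int.fract p ∈ support ω ∩ Ico 0 1 :=
  ⟨by rwa [mem_support, hω.map_fract], Int.fract_nonneg p, Int.fract_lt_one p⟩

namespace TropicalMero

variable {f ω : ℝ → ℝ}

lemma jump_eq (h : TropicalMero f ω) {x ε sl sr : ℝ} (hε : 0 < ε)
    (hl : ∀ y ∈ Ioc (x - ε) x, f y = f x + sl * (y - x))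
    (hr : ∀ y ∈ Ico x (x + ε), f y = f x + sr * (y - x)) : ω x = sr - sl := by
  have left {ε s : ℝ} (hε : 0 < ε) (hs : ∀ y ∈ Ioc (x - ε) x, f y = f x + s * (y - x)) :
      ∀ᶠ y in 𝓝[<] x, f y = f x + s * (y - x) := by
    filter_upwards [Ioo_mem_nhdsLT (sub_lt_self x hε)] with y hy
    exact hs y (Ioo_subset_Ioc_self hy)
  have right {ε s : ℝ} (hε : 0 < ε) (hs : ∀ y ∈ Ico x (x + ε), f y = f x + s * (y - x)) :
      ∀ᶠ y in 𝓝[>] x, f y = f x + s * (y - x) := by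
    filter_upwards [Ioo_mem_nhdsGT (lt_add_of_pos_right x hε)] with y hy
    exact hs y (Ioo_subset_Ico_self hy)
  have ne_left : ∀ᶠ y in 𝓝[<] x, y ≠ x := eventually_mem_nhdsWithin.mono fun _ hy => ne_of_lt hy
  have ne_right : ∀ᶠ y in 𝓝[>] x, y ≠ x := eventually_mem_nhdsWithin.mono fun _ hy => ne_of_gt hy
  obtain ⟨ε', hε', sl', sr', hl', hr', hω⟩ := h.slopes x
  rw [← hω, eq_of_eventually_eq_affine ne_left (left hε' hl') (left hε hl),
    eq_of_eventually_eq_affine ne_right (right hε' hr') (right hε hr)]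

lemma periodic (h : TropicalMero f ω) {c : ℝ} (hf : Periodic f c) : Periodic ω c := by
  intro x
  obtain ⟨ε, hε, sl, sr, hl, hr, hω⟩ := h.slopes x
  rw [← hω]
  refine h.jump_eq hε (fun y hy => ?_) (fun y hy => ?_)
  · rw [← hf.sub_eq y, hl (y - c) ⟨by linarith [hy.1], by linarith [hy.2]⟩, hf x]
    ring
  · rw [← hf.sub_eq y, hr (y - c) ⟨by linarith [hy.1], by linarith [hy.2]⟩, hf x]
    ring

lemma eventually_eq_of_forall_le (h : TropicalMero f ω) {z : ℝ} (hmax : ∀ y, f y ≤ f z)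
    (hz : 0 ≤ ω z) : ∀ᶠ y in 𝓝 z, f y = f z := by
  obtain ⟨ε, hε, sl, sr, hl, hr, hω⟩ := h.slopes z
  have hsl : 0 ≤ sl := by
    have := hl (z - ε / 2) ⟨by linarith, by linarith⟩
    nlinarith [hmax (z - ε / 2)]
  have hsr : sr ≤ 0 := by
    have := hr (z + ε / 2) ⟨by linarith, by linarith⟩
    nlinarith [hmax (z + ε / 2)]
  filter_upwards [Ioo_mem_nhds (sub_lt_self z hε) (lt_add_of_pos_right z hε)] with y hy
  rcases le_total y z with hyz | hyz
  · rw [hl y ⟨hy.1, hyz⟩, show sl = 0 by linarith, zero_mul, add_zero]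
  · rw [hr y ⟨hyz, hy.2⟩, show sr = 0 by linarith, zero_mul, add_zero]

lemma exists_jump_neg (h : TropicalMero f ω) (hf : Periodic f 1) (hnc : ∃ x y, f x ≠ f y) :
    ∃ b, ω b < 0 := by
  by_contra! hω
  obtain ⟨_, ⟨z, rfl⟩, hz⟩ :=
    (hf.compact_of_continuous one_ne_zero h.cont).exists_isGreatest (range_nonempty f)
  have hmax : ∀ y, f y ≤ f z := fun y => hz ⟨y, rfl⟩
  have hopen : IsOpen {y | f y = f z} := isOpen_iff_mem_nhds.2 fun y hy =>
    (h.eventually_eq_of_forall_le (fun w => (hmax w).trans hy.ge) (hω y)).mono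
      fun _ hw => hw.trans hy
  have huniv := IsClopen.eq_univ ⟨isClosed_eq h.cont continuous_const, hopen⟩ ⟨z, rfl⟩
  obtain ⟨x, y, hxy⟩ := hnc
  exact hxy ((eq_univ_iff_forall.1 huniv x).trans (eq_univ_iff_forall.1 huniv y).symm)

end TropicalMero

def poleSet (ω : ℝ → ℝ) (r : ℝ) : Set ℝ := {b : ℝ | b ∈ Ioo (-r) r ∧ ω b < 0}

section Counting

variable {ω : ℝ → ℝ} {r : ℝ}

lemma poleSet_finite (hω : (support ω ∩ Ioo (-r) r).Finite) : (poleSet ω r).Finite :=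
  hω.subset fun _ hb => ⟨hb.2.ne, hb.1⟩

lemma Nfun_eq_sum (hP : (poleSet ω r).Finite) :
    Nfun ω r = 1 / 2 * ∑ b ∈ hP.toFinset, -ω b * (r - |b|) :=
  congrArg _ (finsum_mem_eq_finite_toFinset_sum _ hP)

lemma le_Nfun_of_periodic (hω : Periodic ω 1) (hP : (poleSet ω r).Finite) {b : ℝ}
    (hb : ω b < 0) (hr : 4 ≤ r) : -ω b / 16 * r ^ 2 ≤ Nfun ω r := by
  set N := ⌊r / 2⌋₊
  have hN : r / 4 ≤ N := by linarith [Nat.sub_one_lt_floor (r / 2)]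
  set S := (Finset.range N).image (fun k : ℕ => Int.fract b + k)
  have hcard : S.card = N := by
    rw [Finset.card_image_of_injective _ fun k l hkl => by simpa using hkl, Finset.card_range]
  have hS : ∀ p ∈ S, p ∈ hP.toFinset ∧ -ω b * (r / 2) ≤ -ω p * (r - |p|) := by
    intro p hp
    obtain ⟨k, hk, rfl⟩ := Finset.mem_image.1 hp
    have hk : (k : ℝ) + 1 ≤ r / 2 := by
      exact_mod_cast (Nat.le_floor_iff (by linarith)).1 (Finset.mem_range.1 hk)
    have hωk : ω (Int.fract b + k) = ω b := by
      simpa only [mul_one, hω.map_fract] using hω.nat_mul k (Int.fract b)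
    have hpos : 0 ≤ Int.fract b + k := by positivity
    have hlt : Int.fract b + k < r / 2 := by linarith [Int.fract_lt_one b]
    rw [Set.Finite.mem_toFinset, hωk, abs_of_nonneg hpos]
    exact ⟨⟨⟨by linarith, by linarith⟩, hωk ▸ hb⟩, by nlinarith⟩
  calc -ω b / 16 * r ^ 2 ≤ 1 / 2 * (S.card • (-ω b * (r / 2))) := by
        rw [hcard, nsmul_eq_mul]
        nlinarith [mul_le_mul_of_nonneg_right hN (by nlinarith : 0 ≤ -ω b * r)]
    _ ≤ 1 / 2 * ∑ p ∈ S, -ω p * (r - |p|) := by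
        gcongr; exact Finset.card_nsmul_le_sum _ _ _ fun p hp => (hS p hp).2
    _ ≤ 1 / 2 * ∑ p ∈ hP.toFinset, -ω p * (r - |p|) := by
        refine mul_le_mul_of_nonneg_left (Finset.sum_le_sum_of_subset_of_nonneg
          (fun p hp => (hS p hp).1) fun p hp _ => ?_) (by norm_num)
        obtain ⟨⟨h₁, h₂⟩, hωp⟩ := (Set.Finite.mem_toFinset hP).1 hp
        exact mul_nonneg (by linarith) (by linarith [abs_lt.2 ⟨h₁, h₂⟩])
    _ = Nfun ω r := (Nfun_eq_sum hP).symm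

lemma card_poleSet_le (hω : Periodic ω 1) (hF : (support ω ∩ Ico 0 1).Finite) (hr : 0 ≤ r)
    (hP : (poleSet ω r).Finite) : (hP.toFinset.card : ℝ) ≤ 2 * (r + 1) * hF.toFinset.card := by
  set c := ⌈r⌉₊
  have hsub : hP.toFinset ⊆
      (Finset.Ico (-(c : ℤ)) c ×ˢ hF.toFinset).image fun q : ℤ × ℝ => q.1 + q.2 := by
    intro p hp
    obtain ⟨⟨hp₁, hp₂⟩, hωp⟩ := (Set.Finite.mem_toFinset hP).1 hp
    refine Finset.mem_image.2 ⟨(⌊p⌋, Int.fract p), Finset.mem_product.2 ⟨?_, ?_⟩,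
      Int.floor_add_fract p⟩
    · exact Finset.mem_Ico.2 ⟨Int.le_floor.2 (by push_cast; linarith [Nat.le_ceil r]),
        Int.floor_lt.2 (by push_cast; linarith [Nat.le_ceil r])⟩
    · exact (Set.Finite.mem_toFinset hF).2 (hω.fract_mem_support_inter_Ico hωp.ne)
  have hIco : (Finset.Ico (-(c : ℤ)) c).card = 2 * c := by rw [Int.card_Ico]; omega
  calc (hP.toFinset.card : ℝ)
      ≤ (Finset.Ico (-(c : ℤ)) c ×ˢ hF.toFinset).card := by
        exact_mod_cast (Finset.card_le_card hsub).trans Finset.card_image_le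
    _ = 2 * c * hF.toFinset.card := by rw [Finset.card_product, hIco]; push_cast; ring
    _ ≤ 2 * (r + 1) * hF.toFinset.card := by gcongr; exact (Nat.ceil_lt_add_one hr).le

lemma exists_Nfun_le_mul_sq (hω : Periodic ω 1)
    (hdisc : ∀ r : ℝ, 0 < r → (support ω ∩ Ioo (-r) r).Finite) :
    ∃ C > 0, ∀ r ≥ 1, Nfun ω r ≤ C * r ^ 2 := by
  have hF : (support ω ∩ Ico 0 1).Finite := (hdisc 2 two_pos).subset
    (inter_subset_inter_right _ fun x hx => ⟨by linarith [hx.1], by linarith [hx.2]⟩)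
  set m : ℝ := (hF.toFinset.card : ℝ)
  set B := ∑ q ∈ hF.toFinset, |ω q|
  have hB : 0 ≤ B := Finset.sum_nonneg fun q _ => abs_nonneg _
  refine ⟨2 * m * B + 1, by positivity, fun r hr => ?_⟩
  have hP := poleSet_finite (hdisc r (by linarith))
  have hterm : ∀ p ∈ hP.toFinset, -ω p * (r - |p|) ≤ B * r := by
    intro p hp
    obtain ⟨⟨hp₁, hp₂⟩, hωp⟩ := (Set.Finite.mem_toFinset hP).1 hp
    have hωB : -ω p ≤ B := by
      simpa only [hω.map_fract, abs_of_neg hωp] using Finset.single_le_sum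
        (fun q _ => abs_nonneg (ω q))
        ((Set.Finite.mem_toFinset hF).2 (hω.fract_mem_support_inter_Ico hωp.ne))
    exact mul_le_mul hωB (by linarith [abs_nonneg p]) (by linarith [abs_lt.2 ⟨hp₁, hp₂⟩]) hB
  have hcard := card_poleSet_le hω hF (by linarith) hP
  calc Nfun ω r = 1 / 2 * ∑ p ∈ hP.toFinset, -ω p * (r - |p|) := Nfun_eq_sum hP
    _ ≤ 1 / 2 * (hP.toFinset.card * (B * r)) := by
        gcongr; simpa using Finset.sum_le_card_nsmul _ _ _ hterm
    _ ≤ 1 / 2 * (2 * (r + 1) * m * (B * r)) := by gcongr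
    _ ≤ (2 * m * B + 1) * r ^ 2 := by nlinarith [mul_nonneg (mul_nonneg hB (by positivity : (0 : ℝ) ≤ m)) (by linarith : (0 : ℝ) ≤ r)]

end Counting

lemma mfun_nonneg (f : ℝ → ℝ) (r : ℝ) : 0 ≤ mfun f r := by
  unfold mfun; positivity

lemma mfun_le {f : ℝ → ℝ} {M : ℝ} (hM : ∀ x, f x ≤ M) (r : ℝ) : mfun f r ≤ max M 0 := by
  unfold mfun
  linarith [max_le_max_right 0 (hM r), max_le_max_right 0 (hM (-r))]

lemma log_mul_pow_div_log {c r : ℝ} (n : ℕ) (hc : c ≠ 0) (hr : 0 < r) (hlog : Real.log r ≠ 0) :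
    Real.log (c * r ^ n) / Real.log r = Real.log c / Real.log r + n := by
  rw [Real.log_mul hc (by positivity), Real.log_pow, add_div, mul_div_cancel_right₀ _ hlog]

lemma tendsto_log_div_log_of_le_of_le {g : ℝ → ℝ} {c₁ c₂ : ℝ} {n : ℕ} (hc₁ : 0 < c₁)
    (hc₂ : 0 < c₂) (h₁ : ∀ᶠ r in atTop, c₁ * r ^ n ≤ g r) (h₂ : ∀ᶠ r in atTop, g r ≤ c₂ * r ^ n) :
    Tendsto (fun r => Real.log (g r) / Real.log r) atTop (𝓝 n) := by
  have lim (c : ℝ) : Tendsto (fun r => Real.log c / Real.log r + n) atTop (𝓝 n) := by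
    simpa using (tendsto_const_nhds.div_atTop Real.tendsto_log_atTop).add_const (n : ℝ)
  refine tendsto_of_tendsto_of_tendsto_of_le_of_le' (lim c₁) (lim c₂) ?_ ?_
  · filter_upwards [h₁, eventually_gt_atTop 1] with r h₁ hr
    have hlog := Real.log_pos hr
    rw [← log_mul_pow_div_log n hc₁.ne' (by linarith) hlog.ne']
    gcongr
  · filter_upwards [h₁, h₂, eventually_gt_atTop 1] with r h₁ h₂ hr
    have hlog := Real.log_pos hr
    rw [← log_mul_pow_div_log n hc₂.ne' (by linarith) hlog.ne']
    have : 0 < g r := lt_of_lt_of_le (by positivity) h₁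
    gcongr

/-- A nonconstant 1-periodic tropical meromorphic function satisfies
`T(r, f) ≍ r²` and has order exactly 2. -/
theorem stmt13 (f ω : ℝ → ℝ) (h : TropicalMero f ω)
    (hper : ∀ x, f (x + 1) = f x) (hnc : ∃ x y, f x ≠ f y) :
    (∃ c₁ c₂ r₀ : ℝ, 0 < c₁ ∧ 0 < c₂ ∧
      ∀ r ≥ r₀, c₁ * r ^ 2 ≤ Tfun f ω r ∧ Tfun f ω r ≤ c₂ * r ^ 2) ∧
    Filter.limsup (fun r => Real.log (Tfun f ω r) / Real.log r) Filter.atTop = 2 := by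
  have hω : Periodic ω 1 := h.periodic hper
  obtain ⟨b, hb⟩ := h.exists_jump_neg hper hnc
  obtain ⟨M, hM⟩ := (Periodic.compact_of_continuous hper one_ne_zero h.cont).bddAbove
  obtain ⟨C, hC, hN⟩ := exists_Nfun_le_mul_sq hω h.discrete
  have hc₁ : 0 < -ω b / 16 := by linarith
  have hc₂ : 0 < max M 0 + C := add_pos_of_nonneg_of_pos (le_max_right M 0) hC
  have hT : ∀ r ≥ 4, -ω b / 16 * r ^ 2 ≤ Tfun f ω r ∧ Tfun f ω r ≤ (max M 0 + C) * r ^ 2 := by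
    intro r hr
    have hNlow := le_Nfun_of_periodic hω (poleSet_finite (h.discrete r (by linarith))) hb hr
    have hm := mfun_le (fun x => hM ⟨x, rfl⟩) r
    unfold Tfun
    refine ⟨by linarith [mfun_nonneg f r], ?_⟩
    nlinarith [hN r (by linarith), mul_nonneg (le_max_right M 0) (by nlinarith : 0 ≤ r ^ 2 - 1)]
  refine ⟨⟨_, _, 4, hc₁, hc₂, hT⟩, ?_⟩
  exact (tendsto_log_div_log_of_le_of_le (n := 2) hc₁ hc₂
    ((eventually_ge_atTop 4).mono fun r hr => (hT r hr).1)
    ((eventually_ge_atTop 4).mono fun r hr => (hT r hr).2)).limsup_eq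
end

section
/- Let α > 1 and e_α(x) := α^{⌊x⌋}(x - ⌊x⌋ + 1/(α-1)). Then e_α has no poles, and for r = m + ε with m ∈ ℤ≥0, ε ∈ [0,1): T(r, e_α) = m(r, e_α) = (1/2)[ α^m (ε + 1/(α-1)) + α^{-m-1}(1 - ε + 1/(α-1)) ]. Consequently e_α has hyper-order ρ₂(e_α) = limsup_{r→∞} log log T(r, e_α)/log r = 1 (and infinite order). -/
/-!
The lines `L n x = α ^ n * (x - n + 1 / (α - 1))` satisfy
`L (n + 1) x - L n x = α ^ n * (α - 1) * (x - (n + 1))`, so `e_α = L ⌊x⌋` is their upper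
envelope. Hence `e_α` has a supporting line at every point, all its slope jumps are
nonnegative, and `N(r, e_α) = 0`. Since `⌊x⌋ ∈ (x - 1, x]` and the fractional part lies in
`[0, 1)`, `e_α x` lies between `α ^ (x - 1) / (α - 1)` and `α ^ (x + 1) / (α - 1)`; thus
`log T(r, e_α) = r log α + O(1)` and `log log T(r, e_α) / log r → 1`.
-/

open Set

/-- The tropical exponential `e_α` for `|α| > 1`. -/
noncomputable def eAlpha (α : ℝ) (x : ℝ) : ℝ :=
  α ^ ⌊x⌋ * (x - ⌊x⌋ + 1 / (α - 1))

open Real Filter Topology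

lemma tendsto_log_div_self_of_le_of_le {T : ℝ → ℝ} {β A B : ℝ} (hβ : 0 < β) (hA : 0 < A)
    (hB : 0 < B) (hlo : ∀ᶠ r in atTop, A * β ^ r ≤ T r) (hhi : ∀ᶠ r in atTop, T r ≤ B * β ^ r) :
    Tendsto (fun r => log (T r) / r) atTop (𝓝 (log β)) := by
  have key {C : ℝ} (hC : 0 < C) : Tendsto (fun r => log (C * β ^ r) / r) atTop (𝓝 (log β)) := by
    have := (tendsto_const_nhds (x := log C).div_atTop tendsto_id).add_const (log β)
    rw [zero_add] at this
    refine this.congr' ?_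
    filter_upwards [eventually_gt_atTop 0] with r hr
    rw [id, log_mul hC.ne' (rpow_pos_of_pos hβ r).ne', log_rpow hβ]
    field_simp
  refine tendsto_of_tendsto_of_tendsto_of_le_of_le' (key hA) (key hB) ?_ ?_
  · filter_upwards [hlo, eventually_gt_atTop 0] with r h hr
    gcongr
  · filter_upwards [hlo, hhi, eventually_gt_atTop 0] with r h₁ h₂ hr
    have : 0 < T r := lt_of_lt_of_le (by positivity) h₁
    gcongr

lemma tendsto_log_div_log_of_tendsto_div_self {φ : ℝ → ℝ} {L : ℝ} (hL : 0 < L)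
    (h : Tendsto (fun r => φ r / r) atTop (𝓝 L)) :
    Tendsto (fun r => log (φ r) / log r) atTop (𝓝 1) := by
  have hlog : Tendsto (fun r => log (φ r / r) / log r) atTop (𝓝 0) :=
    ((continuousAt_log hL.ne').tendsto.comp h).div_atTop tendsto_log_atTop
  have := hlog.const_add 1
  rw [add_zero] at this
  refine this.congr' ?_
  filter_upwards [h.eventually (lt_mem_nhds hL), eventually_gt_atTop 1] with r hφ hr
  have hr0 : 0 < r := by linarith
  have hlogr : log r ≠ 0 := (log_pos hr).ne'
  have hφ0 : φ r ≠ 0 := by rintro h0; simp [h0] at hφ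
  rw [log_div hφ0 hr0.ne']
  field_simp
  ring

theorem TropicalMero.nonneg_of_supporting_line {f ω : ℝ → ℝ} (h : TropicalMero f ω) {x s : ℝ}
    (hs : ∀ y, f x + s * (y - x) ≤ f y) : 0 ≤ ω x := by
  obtain ⟨ε, hε, sl, sr, hl, hr, hω⟩ := h.slopes x
  have hleft := hl (x - ε / 2) ⟨by linarith, by linarith⟩
  have hright := hr (x + ε / 2) ⟨by linarith, by linarith⟩
  have := hs (x - ε / 2)
  have := hs (x + ε / 2)
  rw [← hω]
  exact nonneg_of_mul_nonneg_left (by nlinarith) hε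

lemma Nfun_eq_zero_of_nonneg {ω : ℝ → ℝ} (hω : ∀ x, 0 ≤ ω x) (r : ℝ) : Nfun ω r = 0 := by
  have : {b : ℝ | b ∈ Ioo (-r) r ∧ ω b < 0} = ∅ :=
    eq_empty_of_forall_notMem fun b hb => (hω b).not_gt hb.2
  rw [Nfun, this, finsum_mem_empty, mul_zero]

lemma Tfun_eq_mfun_of_nonneg (f : ℝ → ℝ) {ω : ℝ → ℝ} (hω : ∀ x, 0 ≤ ω x) (r : ℝ) :
    Tfun f ω r = mfun f r := by
  rw [Tfun, Nfun_eq_zero_of_nonneg hω, add_zero]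

lemma mfun_of_pos {f : ℝ → ℝ} (hf : ∀ x, 0 < f x) (r : ℝ) : mfun f r = (f r + f (-r)) / 2 := by
  rw [mfun, max_eq_left (hf r).le, max_eq_left (hf (-r)).le]

noncomputable def eAlphaLine (α : ℝ) (n : ℤ) (x : ℝ) : ℝ :=
  α ^ n * (x - n + 1 / (α - 1))

section eAlpha

variable {α : ℝ}

lemma eAlpha_eq_eAlphaLine_floor (α x : ℝ) : eAlpha α x = eAlphaLine α ⌊x⌋ x := rfl

lemma eAlphaLine_add_one_sub (hα : 1 < α) (n : ℤ) (x : ℝ) :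
    eAlphaLine α (n + 1) x - eAlphaLine α n x = α ^ n * ((α - 1) * (x - (n + 1))) := by
  have hα1 : α - 1 ≠ 0 := by linarith
  unfold eAlphaLine
  rw [zpow_add_one₀ (by linarith)]
  push_cast
  field_simp
  ring

lemma eAlphaLine_le_eAlpha (hα : 1 < α) (n : ℤ) (x : ℝ) : eAlphaLine α n x ≤ eAlpha α x := by
  have hstep (k : ℤ) : 0 ≤ α ^ k * (α - 1) := mul_nonneg (by positivity) (by linarith)
  rw [eAlpha_eq_eAlphaLine_floor]
  rcases le_total ⌊x⌋ n with hn | hn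
  · induction n, hn using Int.leInduction with
    | base => rfl
    | succ k hk ih =>
      have hx : x - (k + 1) ≤ 0 := by
        have := Int.lt_floor_add_one x
        have : (⌊x⌋ : ℝ) ≤ k := by exact_mod_cast hk
        linarith
      have := eAlphaLine_add_one_sub hα k x
      nlinarith [hstep k]
  · induction n, hn using Int.leInductionDown with
    | base => rfl
    | pred k hk ih =>
      have hx : 0 ≤ x - (k - 1 + 1) := by
        have := Int.floor_le x
        have : (k : ℝ) ≤ ⌊x⌋ := by exact_mod_cast hk
        linarith
      have := eAlphaLine_add_one_sub hα (k - 1) x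
      rw [sub_add_cancel] at this
      push_cast at this
      nlinarith [hstep (k - 1)]

lemma TropicalMero.eAlpha_nonneg (hα : 1 < α) {ω : ℝ → ℝ} (h : TropicalMero (eAlpha α) ω)
    (x : ℝ) : 0 ≤ ω x := by
  refine h.nonneg_of_supporting_line (s := α ^ ⌊x⌋) fun y => ?_
  calc eAlpha α x + α ^ ⌊x⌋ * (y - x) = eAlphaLine α ⌊x⌋ y := by
        rw [eAlpha_eq_eAlphaLine_floor, eAlphaLine, eAlphaLine]; ring
    _ ≤ eAlpha α y := eAlphaLine_le_eAlpha hα _ _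

lemma eAlpha_eq_eAlphaLine_of_mem_Icc (hα : 1 < α) {n : ℤ} {x : ℝ}
    (hx : x ∈ Icc (n : ℝ) (n + 1)) :
    eAlpha α x = eAlphaLine α n x := by
  rcases hx.2.lt_or_eq with hlt | rfl
  · rw [eAlpha_eq_eAlphaLine_floor, Int.floor_eq_iff.2 ⟨hx.1, hlt⟩]
  · have hfloor : ⌊(n : ℝ) + 1⌋ = n + 1 := by exact_mod_cast Int.floor_intCast (n + 1)
    have := eAlphaLine_add_one_sub hα n (n + 1)
    rw [eAlpha_eq_eAlphaLine_floor, hfloor]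
    linarith

lemma eAlpha_pos (hα : 1 < α) (x : ℝ) : 0 < eAlpha α x := by
  have := Int.floor_le x
  have : 0 < 1 / (α - 1) := by rw [one_div_pos]; linarith
  exact mul_pos (zpow_pos (by linarith) _) (by linarith)

lemma mfun_eAlpha_natCast_add (hα : 1 < α) (m : ℕ) {ε : ℝ} (hε : ε ∈ Ico (0 : ℝ) 1) :
    mfun (eAlpha α) ((m : ℝ) + ε) =
      (1 / 2) * (α ^ m * (ε + 1 / (α - 1)) + α ^ (-(m : ℤ) - 1) * (1 - ε + 1 / (α - 1))) := by
  obtain ⟨hε0, hε1⟩ := hε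
  have hpos : eAlpha α ((m : ℝ) + ε) = eAlphaLine α m ((m : ℝ) + ε) :=
    eAlpha_eq_eAlphaLine_of_mem_Icc hα (by push_cast; constructor <;> linarith)
  have hneg : eAlpha α (-((m : ℝ) + ε)) = eAlphaLine α (-m - 1) (-((m : ℝ) + ε)) :=
    eAlpha_eq_eAlphaLine_of_mem_Icc hα (by push_cast; constructor <;> linarith)
  rw [mfun_of_pos (eAlpha_pos hα), hpos, hneg, eAlphaLine, eAlphaLine, zpow_natCast]
  push_cast
  ring

lemma eAlpha_le (hα : 1 < α) (x : ℝ) : eAlpha α x ≤ 1 / (α - 1) * α ^ (x + 1) := by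
  have hc : 1 / (α - 1) * α = 1 + 1 / (α - 1) := by field_simp [show α - 1 ≠ 0 by linarith]; ring
  have hpow : α ^ ⌊x⌋ ≤ α ^ x := by
    rw [← rpow_intCast]; exact rpow_le_rpow_of_exponent_le hα.le (Int.floor_le x)
  have hfrac : x - ⌊x⌋ + 1 / (α - 1) ≤ 1 / (α - 1) * α := by
    linarith [Int.lt_floor_add_one x]
  calc eAlpha α x ≤ α ^ x * (1 / (α - 1) * α) := by
        unfold eAlpha
        gcongr
        · linarith [Int.floor_le x, one_div_pos.2 (show 0 < α - 1 by linarith)]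
    _ = 1 / (α - 1) * α ^ (x + 1) := by rw [rpow_add_one (by linarith)]; ring

lemma le_eAlpha (hα : 1 < α) (x : ℝ) : 1 / (α - 1) * α ^ (x - 1) ≤ eAlpha α x := by
  have hpow : α ^ (x - 1) ≤ α ^ ⌊x⌋ := by
    rw [← rpow_intCast]
    exact rpow_le_rpow_of_exponent_le hα.le (by linarith [Int.sub_one_lt_floor x])
  have hc : 0 ≤ 1 / (α - 1) := one_div_nonneg.2 (by linarith)
  rw [mul_comm]
  exact mul_le_mul hpow (by linarith [Int.floor_le x]) hc (by positivity)

lemma le_mfun_eAlpha (hα : 1 < α) (r : ℝ) :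
    1 / (α - 1) / (2 * α) * α ^ r ≤ mfun (eAlpha α) r := by
  have := le_eAlpha hα r
  have := eAlpha_pos hα (-r)
  rw [rpow_sub_one (by linarith)] at *
  rw [mfun_of_pos (eAlpha_pos hα)]
  have : 1 / (α - 1) / (2 * α) * α ^ r = 1 / (α - 1) * (α ^ r / α) / 2 := by ring
  linarith

lemma mfun_eAlpha_le (hα : 1 < α) {r : ℝ} (hr : 0 ≤ r) :
    mfun (eAlpha α) r ≤ 1 / (α - 1) * α * α ^ r := by
  have h₁ := eAlpha_le hα r
  have h₂ := eAlpha_le hα (-r)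
  have : 1 / (α - 1) * α ^ (-r + 1) ≤ 1 / (α - 1) * α ^ (r + 1) :=
    mul_le_mul_of_nonneg_left (rpow_le_rpow_of_exponent_le hα.le (by linarith))
      (one_div_nonneg.2 (by linarith))
  have : 1 / (α - 1) * α * α ^ r = 1 / (α - 1) * α ^ (r + 1) := by
    rw [rpow_add_one (by linarith)]; ring
  rw [mfun_of_pos (eAlpha_pos hα)]
  linarith

end eAlpha

/-- For `α > 1`, `e_α` has no poles, `T(r, e_α) = m(r, e_α)` has the stated
explicit value for `r = m + ε` (`m ∈ ℤ≥0`, `ε ∈ [0,1)`), and `e_α` has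
hyper-order 1. -/
theorem stmt17 (α : ℝ) (hα : 1 < α) (ω : ℝ → ℝ)
    (h : TropicalMero (eAlpha α) ω) :
    (∀ r : ℝ, 0 < r → Nfun ω r = 0) ∧
    (∀ (m : ℕ) (ε : ℝ), ε ∈ Set.Ico (0 : ℝ) 1 →
      Tfun (eAlpha α) ω ((m : ℝ) + ε) = mfun (eAlpha α) ((m : ℝ) + ε) ∧
      mfun (eAlpha α) ((m : ℝ) + ε) =
        (1 / 2) * (α ^ m * (ε + 1 / (α - 1)) +
          α ^ (-(m : ℤ) - 1) * (1 - ε + 1 / (α - 1)))) ∧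
    Filter.limsup
      (fun r => Real.log (Real.log (Tfun (eAlpha α) ω r)) / Real.log r)
      Filter.atTop = 1 := by
  have hω := h.eAlpha_nonneg hα
  have hT := Tfun_eq_mfun_of_nonneg (eAlpha α) hω
  refine ⟨fun r _ => Nfun_eq_zero_of_nonneg hω r,
    fun m ε hε => ⟨hT _, mfun_eAlpha_natCast_add hα m hε⟩, ?_⟩
  have hc : 0 < 1 / (α - 1) := one_div_pos.2 (by linarith)
  have hgrowth : Tendsto (fun r => log (Tfun (eAlpha α) ω r) / r) atTop (𝓝 (log α)) := by
    simp only [hT]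
    exact tendsto_log_div_self_of_le_of_le (by linarith) (by positivity) (by positivity)
      (.of_forall (le_mfun_eAlpha hα)) ((eventually_ge_atTop 0).mono fun r => mfun_eAlpha_le hα)
  exact (tendsto_log_div_log_of_tendsto_div_self (log_pos hα) hgrowth).limsup_eq
end
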